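/- Let M be the symmetric 10×10 real matrix M = (1/66)·N, where N has rows (41, −4√22, 0, 0, 0, 0, 0, 0, 0, 0), (−4√22, 32, 0, 0, 0, 0, 0, 0, 0, 0), (0, 0, 18, 0, 0, 0, 0, 0, 0, 0), (0, 0, 0, 24, 0, 0, 0, 0, 0, 0), (0, 0, 0, 0, 8, 0, 0, 2√22, 0, 0), (0, 0, 0, 0, 0, 8, −2√22, 0, 0, 0), (0, 0, 0, 0, 0, −2√22, 5, 0, 0, 0), (0, 0, 0, 0, 2√22, 0, 0, 5, 0, 0), (0, 0, 0, 0, 0, 0, 0, 0, 12, 0), (0, 0, 0, 0, 0, 0, 0, 0, 0, 12). Let f ∈ ℝ[X] be the characteristic polynomial of M and f′ its derivative. Then gcd(f, f′) has degree at least 3; equivalently, M has at least 3 eigenvalues of multiplicity at least 2. -/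
import Mathlib


open Polynomial

/-- The curvature operator of the 5-dimensional homogeneous Einstein solvmanifold of
Example 4.2, as a symmetric 10×10 real matrix `(1/66) • N`. -/
noncomputable def curvEx42 : Matrix (Fin 10) (Fin 10) ℝ :=
  (66 : ℝ)⁻¹ •
  !![41, -4*Real.sqrt 22, 0, 0, 0, 0, 0, 0, 0, 0;
     -4*Real.sqrt 22, 32, 0, 0, 0, 0, 0, 0, 0, 0;
     0, 0, 18, 0, 0, 0, 0, 0, 0, 0;
     0, 0, 0, 24, 0, 0, 0, 0, 0, 0;
     0, 0, 0, 0, 8, 0, 0, 2*Real.sqrt 22, 0, 0;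
     0, 0, 0, 0, 0, 8, -2*Real.sqrt 22, 0, 0, 0;
     0, 0, 0, 0, 0, -2*Real.sqrt 22, 5, 0, 0, 0;
     0, 0, 0, 0, 2*Real.sqrt 22, 0, 0, 5, 0, 0;
     0, 0, 0, 0, 0, 0, 0, 0, 12, 0;
     0, 0, 0, 0, 0, 0, 0, 0, 0, 12]

namespace Ex42Aux

noncomputable section

def c0 : ℝ := (66:ℝ)⁻¹
def t0 : ℝ := Real.sqrt 22

def C10 : Matrix (Fin 10) (Fin 10) ℝ :=
  !![c0*41, c0*(-4*t0), 0, 0, 0, 0, 0, 0, 0, 0;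
     c0*(-4*t0), c0*32, 0, 0, 0, 0, 0, 0, 0, 0;
     0, 0, c0*18, 0, 0, 0, 0, 0, 0, 0;
     0, 0, 0, c0*24, 0, 0, 0, 0, 0, 0;
     0, 0, 0, 0, c0*8, 0, 0, c0*(2*t0), 0, 0;
     0, 0, 0, 0, 0, c0*8, c0*(-2*t0), 0, 0, 0;
     0, 0, 0, 0, 0, c0*(-2*t0), c0*5, 0, 0, 0;
     0, 0, 0, 0, c0*(2*t0), 0, 0, c0*5, 0, 0;
     0, 0, 0, 0, 0, 0, 0, 0, c0*12, 0;
     0, 0, 0, 0, 0, 0, 0, 0, 0, c0*12]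

def T2x : Matrix (Fin 2) (Fin 2) ℝ := !![c0*41, c0*(-4*t0); c0*(-4*t0), c0*32]

def B8x : Matrix (Fin 8) (Fin 8) ℝ :=
  !![c0*18,0,0,0,0,0,0,0;
     0,c0*24,0,0,0,0,0,0;
     0,0,c0*8,0,0,c0*(2*t0),0,0;
     0,0,0,c0*8,c0*(-2*t0),0,0,0;
     0,0,0,c0*(-2*t0),c0*5,0,0,0;
     0,0,c0*(2*t0),0,0,c0*5,0,0;
     0,0,0,0,0,0,c0*12,0;
     0,0,0,0,0,0,0,c0*12]

def D2x : Matrix (Fin 2) (Fin 2) ℝ := !![c0*18, 0; 0, c0*24]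

def B6x : Matrix (Fin 6) (Fin 6) ℝ :=
  !![c0*8,0,0,c0*(2*t0),0,0;
     0,c0*8,c0*(-2*t0),0,0,0;
     0,c0*(-2*t0),c0*5,0,0,0;
     c0*(2*t0),0,0,c0*5,0,0;
     0,0,0,0,c0*12,0;
     0,0,0,0,0,c0*12]

def F4x : Matrix (Fin 4) (Fin 4) ℝ :=
  !![c0*8,0,0,c0*(2*t0);
     0,c0*8,c0*(-2*t0),0;
     0,c0*(-2*t0),c0*5,0;
     c0*(2*t0),0,0,c0*5]

def R2x : Matrix (Fin 2) (Fin 2) ℝ := !![c0*12, 0; 0, c0*12]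

lemma hC10 : curvEx42 = C10 := by
  rw [curvEx42]
  rw [show ((66:ℝ)⁻¹) = c0 from rfl]
  simp only [Matrix.smul_of, Matrix.smul_cons, Matrix.smul_empty, smul_eq_mul, mul_zero]
  rfl

lemma charpoly_split {m n : ℕ} (M : Matrix (Fin (m+n)) (Fin (m+n)) ℝ)
    (A : Matrix (Fin m) (Fin m) ℝ) (D : Matrix (Fin n) (Fin n) ℝ)
    (h : M = Matrix.reindex finSumFinEquiv finSumFinEquiv (Matrix.fromBlocks A 0 0 D)) :
    M.charpoly = A.charpoly * D.charpoly := by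
  rw [h, Matrix.charpoly_reindex, Matrix.charpoly_fromBlocks_zero₁₂]

lemma split1 : curvEx42.charpoly = T2x.charpoly * B8x.charpoly := by
  apply charpoly_split (m := 2) (n := 8)
  rw [hC10]
  ext i j
  fin_cases i <;> fin_cases j <;> rfl

lemma split2 : B8x.charpoly = D2x.charpoly * B6x.charpoly := by
  apply charpoly_split (m := 2) (n := 6)
  ext i j
  fin_cases i <;> fin_cases j <;> rfl

lemma split3 : B6x.charpoly = F4x.charpoly * R2x.charpoly := by
  apply charpoly_split (m := 4) (n := 2)
  ext i j
  fin_cases i <;> fin_cases j <;> rfl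

lemma charpoly_fin_two' (a b c d : ℝ) :
    (!![a,b;c,d]).charpoly = (X - C a) * (X - C d) - C b * C c := by
  rw [Matrix.charpoly, Matrix.det_fin_two]
  rw [Matrix.charmatrix_apply_eq, Matrix.charmatrix_apply_eq,
    Matrix.charmatrix_apply_ne _ _ _ (by decide), Matrix.charmatrix_apply_ne _ _ _ (by decide)]
  simp

lemma charpoly_F4_gen (c t : ℝ) (h : t*t = 22) :
    (!![c*8, 0, 0, c*(2*t); 0, c*8, c*(-2*t), 0; 0, c*(-2*t), c*5, 0;
        c*(2*t), 0, 0, c*5]).charpoly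
      = ((X - C (c*16)) * (X - C (c*(-3))))^2 := by
  have hu : (C t : ℝ[X]) * C t = 22 := by
    rw [← C_mul, h]; exact map_ofNat C 22
  rw [Matrix.charpoly]
  have hcm : Matrix.charmatrix (!![c*8, 0, 0, c*(2*t); 0, c*8, c*(-2*t), 0;
        0, c*(-2*t), c*5, 0; c*(2*t), 0, 0, c*5] : Matrix (Fin 4) (Fin 4) ℝ) =
      !![X - C (c*8), 0, 0, -C (c*(2*t)); 0, X - C (c*8), -C (c*(-2*t)), 0;
         0, -C (c*(-2*t)), X - C (c*5), 0; -C (c*(2*t)), 0, 0, X - C (c*5)] := by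
    ext i j
    fin_cases i <;> fin_cases j <;>
      simp [Matrix.charmatrix_apply, Matrix.diagonal_apply]
  rw [hcm]
  simp +decide [Matrix.det_succ_row_zero, Fin.sum_univ_succ, Matrix.submatrix_apply,
    Fin.succAbove, Fin.castSucc, Fin.castAdd, Fin.castLE, Fin.succ]
  simp only [C_mul, map_ofNat, map_neg, C_neg]
  ring_nf
  linear_combination (-4*(C c)^2*(2*(X^2-13*(C c)*X+40*(C c)^2) - 4*(C t)^2*(C c)^2
    - 88*(C c)^2)) * hu

lemma ht0 : t0 * t0 = 22 := Real.mul_self_sqrt (by norm_num)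

lemma charpoly_factored :
    curvEx42.charpoly = (T2x.charpoly * D2x.charpoly) *
      ((X - C (c0*16)) * (X - C (c0*(-3))))^2 * (X - C (c0*12))^2 := by
  have h4 : F4x.charpoly = ((X - C (c0*16)) * (X - C (c0*(-3))))^2 :=
    charpoly_F4_gen c0 t0 ht0
  have h5 : R2x.charpoly = (X - C (c0*12)) * (X - C (c0*12)) - C 0 * C 0 :=
    charpoly_fin_two' _ _ _ _
  rw [split1, split2, split3, h4, h5]
  simp only [map_zero, mul_zero, zero_mul, sub_zero]
  ring

end

end Ex42Aux

section FinalAux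

open Ex42Aux

lemma Ex42_sq_dvd_deriv {p f : ℝ[X]} (h : p^2 ∣ f) : p ∣ derivative f := by
  obtain ⟨g, rfl⟩ := h
  refine ⟨(2:ℝ[X]) * derivative p * g + p * derivative g, ?_⟩
  rw [derivative_mul, derivative_pow]
  simp only [Nat.cast_ofNat, map_ofNat, pow_one]
  ring

end FinalAux

/-- For the curvature operator `M` of Example 4.2 with characteristic polynomial `f`,
the gcd of `f` and `f'` in `ℝ[X]` has degree at least `3`; equivalently, `M` has at
least `3` eigenvalues of multiplicity at least `2`. -/
theorem gcd_charpoly_curvEx42 :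
    3 ≤ (EuclideanDomain.gcd curvEx42.charpoly
          (derivative curvEx42.charpoly)).natDegree ∧
    ∃ s : Finset ℝ, s.card = 3 ∧ ∀ μ ∈ s, 2 ≤ curvEx42.charpoly.rootMultiplicity μ := by
  classical
  set f := curvEx42.charpoly with hfdef
  have hne : f ≠ 0 := (Matrix.charpoly_monic _).ne_zero
  have hf := Ex42Aux.charpoly_factored
  set μ₁ : ℝ := Ex42Aux.c0*16 with hμ₁
  set μ₂ : ℝ := Ex42Aux.c0*(-3) with hμ₂
  set μ₃ : ℝ := Ex42Aux.c0*12 with hμ₃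
  have hd1 : (X - C μ₁)^2 ∣ f :=
    ⟨(Ex42Aux.T2x.charpoly * Ex42Aux.D2x.charpoly) * (X - C μ₂)^2 * (X - C μ₃)^2,
      by rw [hfdef, hf]; ring⟩
  have hd2 : (X - C μ₂)^2 ∣ f :=
    ⟨(Ex42Aux.T2x.charpoly * Ex42Aux.D2x.charpoly) * (X - C μ₁)^2 * (X - C μ₃)^2,
      by rw [hfdef, hf]; ring⟩
  have hd3 : (X - C μ₃)^2 ∣ f :=
    ⟨(Ex42Aux.T2x.charpoly * Ex42Aux.D2x.charpoly) * ((X - C μ₁) * (X - C μ₂))^2,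
      by rw [hfdef, hf]; ring⟩
  have hdist12 : μ₁ ≠ μ₂ := by norm_num [hμ₁, hμ₂, Ex42Aux.c0]
  have hdist13 : μ₁ ≠ μ₃ := by norm_num [hμ₁, hμ₃, Ex42Aux.c0]
  have hdist23 : μ₂ ≠ μ₃ := by norm_num [hμ₂, hμ₃, Ex42Aux.c0]
  have key : ∀ μ : ℝ, (X - C μ)^2 ∣ f → 2 ≤ f.rootMultiplicity μ := fun μ h =>
    (Polynomial.le_rootMultiplicity_iff hne).2 h
  set g := EuclideanDomain.gcd f (derivative f) with hg
  have hg0 : g ≠ 0 := by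
    intro h0
    exact hne (EuclideanDomain.gcd_eq_zero_iff.mp h0).1
  have hroot : ∀ μ : ℝ, (X - C μ)^2 ∣ f → g.IsRoot μ := by
    intro μ h
    have h1 : (X - C μ) ∣ f := (dvd_pow_self (X - C μ) two_ne_zero).trans h
    have h2 : (X - C μ) ∣ derivative f := Ex42_sq_dvd_deriv h
    exact Polynomial.dvd_iff_isRoot.1 (EuclideanDomain.dvd_gcd h1 h2)
  have hsub : ({μ₁, μ₂, μ₃} : Finset ℝ) ⊆ g.roots.toFinset := by
    intro μ hμ
    simp only [Finset.mem_insert, Finset.mem_singleton] at hμ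
    rcases hμ with rfl | rfl | rfl <;>
      refine Multiset.mem_toFinset.2 (Polynomial.mem_roots'.2 ⟨hg0, ?_⟩)
    · exact hroot _ hd1
    · exact hroot _ hd2
    · exact hroot _ hd3
  have hcard : ({μ₁, μ₂, μ₃} : Finset ℝ).card = 3 := by
    rw [Finset.card_insert_of_notMem, Finset.card_insert_of_notMem, Finset.card_singleton]
    · simp [hdist23]
    · simp [hdist12, hdist13]
  constructor
  · calc (3:ℕ) = ({μ₁, μ₂, μ₃} : Finset ℝ).card := hcard.symm
    _ ≤ g.roots.toFinset.card := Finset.card_le_card hsub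
    _ ≤ Multiset.card g.roots := Multiset.toFinset_card_le _
    _ ≤ g.natDegree := Polynomial.card_roots' g
  · exact ⟨{μ₁, μ₂, μ₃}, hcard, by
      intro μ hμ
      simp only [Finset.mem_insert, Finset.mem_singleton] at hμ
      rcases hμ with rfl | rfl | rfl
      · exact key _ hd1
      · exact key _ hd2
      · exact key _ hd3⟩
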